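/- Let P be a polyomino and let G_P be the graph whose vertices are the cells of P and whose edges are the attacking pairs. Then G_P is well-covered (all maximal independent sets of G_P have the same cardinality) if and only if G_P is localizable, i.e., the vertex set of G_P admits a partition into cliques each of which intersects every maximal independent set of G_P. -/

import Mathlib

/-- A cell of the grid, identified with its lower-left corner. -/
abbrev Cell : Type := ℤ × ℤ

/-- Two cells are adjacent if they differ by `(±1,0)` or `(0,±1)`. -/
def Adjacent (c d : Cell) : Prop :=
  (c.1 = d.1 ∧ (c.2 = d.2 + 1 ∨ d.2 = c.2 + 1)) ∨
  (c.2 = d.2 ∧ (c.1 = d.1 + 1 ∨ d.1 = c.1 + 1))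

/-- A polyomino: a finite nonempty set of cells, any two of which are joined by a
path of adjacent cells inside the set. -/
def IsPolyomino (P : Finset Cell) : Prop :=
  P.Nonempty ∧ ∀ c ∈ P, ∀ d ∈ P,
    Relation.ReflTransGen (fun a b => Adjacent a b ∧ a ∈ P ∧ b ∈ P) c d

/-- A horizontal segment of consecutive cells in a row. -/
def IsHSeg (S : Finset Cell) : Prop :=
  ∃ y a b : ℤ, a ≤ b ∧ S = (Finset.Icc a b).image (fun x => (x, y))

/-- A vertical segment of consecutive cells in a column. -/
def IsVSeg (S : Finset Cell) : Prop :=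
  ∃ x a b : ℤ, a ≤ b ∧ S = (Finset.Icc a b).image (fun y => (x, y))

/-- A maximal horizontal cell interval of `P`. -/
def IsMaxHInterval (P I : Finset Cell) : Prop :=
  IsHSeg I ∧ I ⊆ P ∧ ∀ I', IsHSeg I' → I' ⊆ P → I ⊆ I' → I' = I

/-- A maximal vertical cell interval of `P`. -/
def IsMaxVInterval (P I : Finset Cell) : Prop :=
  IsVSeg I ∧ I ⊆ P ∧ ∀ I', IsVSeg I' → I' ⊆ P → I ⊆ I' → I' = I

/-- A maximal cell interval of `P`. -/
def IsMaxInterval (P I : Finset Cell) : Prop :=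
  IsMaxHInterval P I ∨ IsMaxVInterval P I

/-- Two distinct cells of `P` attack each other if they lie in a common maximal
cell interval of `P`. -/
def Attacks (P : Finset Cell) (c d : Cell) : Prop :=
  c ≠ d ∧ ∃ I, IsMaxInterval P I ∧ c ∈ I ∧ d ∈ I

/-- A set of pairwise non-attacking cells of `P` (a face of the rook complex). -/
def IsRookSet (P F : Finset Cell) : Prop :=
  F ⊆ P ∧ ∀ c ∈ F, ∀ d ∈ F, ¬ Attacks P c d

/-- A maximal set of pairwise non-attacking cells of `P` (a facet of the rook complex). -/
def IsMaxRookSet (P F : Finset Cell) : Prop :=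
  IsRookSet P F ∧ ∀ G, IsRookSet P G → F ⊆ G → G = F

/-- An interval `I` is embedded if some set `F` of pairwise non-attacking cells,
disjoint from `I`, attacks every cell of `I`. -/
def IsEmbedded (P I : Finset Cell) : Prop :=
  ∃ F : Finset Cell, IsRookSet P F ∧ F ∩ I = ∅ ∧ ∀ c ∈ I, ∃ f ∈ F, Attacks P f c

/-- A partition of `P`: pairwise disjoint maximal cell intervals whose union is `P`. -/
def IsPartition (P : Finset Cell) (A : Finset (Finset Cell)) : Prop :=
  (∀ I ∈ A, IsMaxInterval P I) ∧
  (∀ I ∈ A, ∀ J ∈ A, I ≠ J → Disjoint I J) ∧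
  A.biUnion id = P

/-- A super partition: a partition none of whose intervals is embedded. -/
def IsSuperPartition (P : Finset Cell) (A : Finset (Finset Cell)) : Prop :=
  IsPartition P A ∧ ∀ I ∈ A, ¬ IsEmbedded P I

/-- `P` is a square: a translate of the `n × n` block of cells for some `n ≥ 1`. -/
def IsSquareBlock (P : Finset Cell) : Prop :=
  ∃ a b n : ℤ, 1 ≤ n ∧ P = Finset.Icc a (a + n - 1) ×ˢ Finset.Icc b (b + n - 1)

/-- The graph `G_P` on the cells of `P` whose edges are the attacking pairs. -/
def GP (P : Finset Cell) : SimpleGraph {c : Cell // c ∈ P} where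
  Adj c d := Attacks P (c : Cell) (d : Cell)
  symm := by
    constructor
    rintro c d ⟨hne, I, hI, hc, hd⟩
    exact ⟨hne.symm, I, hI, hd, hc⟩
  loopless := by
    constructor
    rintro c ⟨hne, -⟩
    exact hne rfl

/-- The complement graph `Ḡ_P`. -/
def GBar (P : Finset Cell) : SimpleGraph {c : Cell // c ∈ P} := (GP P)ᶜ

/-- `G` has an induced cycle of length `n`: an injective map from `ZMod n`
whose image induces exactly the cycle adjacencies. -/
def HasInducedCycle {V : Type*} (G : SimpleGraph V) (n : ℕ) : Prop :=
  3 ≤ n ∧ ∃ f : ZMod n → V, Function.Injective f ∧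
    ∀ i j : ZMod n, G.Adj (f i) (f j) ↔ (i = j + 1 ∨ j = i + 1)

/-- A graph is chordal if it has no induced cycle of length at least 4. -/
def IsChordal {V : Type*} (G : SimpleGraph V) : Prop :=
  ∀ n, 4 ≤ n → ¬ HasInducedCycle G n

/-- `P` is simple: any two cells outside `P` are joined by a path of adjacent
cells outside `P`. -/
def IsSimple (P : Finset Cell) : Prop :=
  ∀ c d : Cell, c ∉ P → d ∉ P →
    Relation.ReflTransGen (fun a b => Adjacent a b ∧ a ∉ P ∧ b ∉ P) c d

/-- `P` is thin: it contains no four cells forming a `2 × 2` square. -/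
def IsThin (P : Finset Cell) : Prop :=
  ¬ ∃ a : Cell, ({a, (a.1 + 1, a.2), (a.1, a.2 + 1), (a.1 + 1, a.2 + 1)} : Finset Cell) ⊆ P

/-- A path of distinct cells of `P`, consecutive cells being adjacent. -/
def IsCellPath (P : Finset Cell) (l : List Cell) : Prop :=
  l.Nodup ∧ (∀ c ∈ l, c ∈ P) ∧ l.Chain' Adjacent

/-- The number of changes of direction of a path of cells: positions `k`
(with `1 ≤ k ≤ length - 2`) where the `(k-1)`-st and `(k+1)`-st cells differ
in both coordinates. -/
def dirChanges (l : List Cell) : ℕ :=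
  ((Finset.Ico 1 (l.length - 1)).filter (fun k =>
    (l.getD (k - 1) (0, 0)).1 ≠ (l.getD (k + 1) (0, 0)).1 ∧
    (l.getD (k - 1) (0, 0)).2 ≠ (l.getD (k + 1) (0, 0)).2)).card

/-- The eight rotations/reflections of the grid. -/
def dihedralMaps : List (Cell → Cell) :=
  [fun p => (p.1, p.2), fun p => (-p.2, p.1), fun p => (-p.1, -p.2), fun p => (p.2, -p.1),
   fun p => (p.2, p.1), fun p => (-p.1, p.2), fun p => (-p.2, -p.1), fun p => (p.1, -p.2)]

/-- `P` is obtained from `Q` by a translation, rotation or reflection of `ℤ²`. -/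
def CongruentTo (P Q : Finset Cell) : Prop :=
  ∃ g ∈ dihedralMaps, ∃ t : Cell, P = Q.image (fun p => g p + t)

/-- A brush polyomino with handle `J`. -/
def IsBrush (P J : Finset Cell) : Prop :=
  IsPolyomino P ∧ IsSimple P ∧ IsThin P ∧ IsMaxInterval P J ∧
  (∀ I, IsMaxInterval P I → 2 ≤ I.card → I ≠ J → (I ∩ J).Nonempty) ∧
  (∀ c ∈ P, c ∈ J ∨ ∃ I, IsMaxInterval P I ∧ 2 ≤ I.card ∧ c ∈ I)

/-- A short brush polyomino: a brush all of whose bristles have at most two cells. -/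
def IsShortBrush (P : Finset Cell) : Prop :=
  ∃ J, IsBrush P J ∧ ∀ I, IsMaxInterval P I → I ≠ J → I.card ≤ 2

/-- A pure brush polyomino: handle `J` of cardinality `d` together with `d`
pairwise disjoint bristles `I 0, …, I (d-1)` perpendicular to `J`, each meeting
`J`, whose union is `P`. -/
def IsPureBrush (P J : Finset Cell) (d : ℕ) (I : Fin d → Finset Cell) : Prop :=
  IsPolyomino P ∧ IsSimple P ∧ IsThin P ∧
  J.card = d ∧
  ((IsMaxHInterval P J ∧ ∀ k, IsMaxVInterval P (I k)) ∨
   (IsMaxVInterval P J ∧ ∀ k, IsMaxHInterval P (I k))) ∧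
  (∀ j k, j ≠ k → Disjoint (I j) (I k)) ∧
  (∀ k, ((I k) ∩ J).Nonempty) ∧
  Finset.univ.biUnion I = P

/-- The `k`-th elementary symmetric polynomial of `x 0, …, x (d-1)`. -/
def esymm {R : Type*} [CommRing R] {d : ℕ} (k : ℕ) (x : Fin d → R) : R :=
  ∑ s ∈ Finset.powersetCard k (Finset.univ : Finset (Fin d)), ∏ i ∈ s, x i

/-- `G_P` has an induced matching with `n` edges `{A i, B i}`. -/
def HasInducedMatching (P : Finset Cell) (n : ℕ) : Prop :=
  ∃ A B : Fin n → Cell,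
    (∀ i, Attacks P (A i) (B i)) ∧
    (∀ i j, i ≠ j → A i ≠ A j) ∧
    (∀ i j, i ≠ j → B i ≠ B j) ∧
    (∀ i j, A i ≠ B j) ∧
    (∀ i j, i ≠ j →
      ¬ Attacks P (A i) (A j) ∧ ¬ Attacks P (A i) (B j) ∧ ¬ Attacks P (B i) (B j))

/-- The induced matching number `ν(G_P)`. -/
noncomputable def matchNum (P : Finset Cell) : ℕ := sSup {n | HasInducedMatching P n}

/-- `c` is a single cell of the maximal interval `I`: the maximal interval of `P`
through `c` perpendicular to `I` is `{c}`. -/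
def IsSingleCell (P I : Finset Cell) (c : Cell) : Prop :=
  c ∈ I ∧
  ((IsMaxHInterval P I ∧ ∀ I', IsMaxVInterval P I' → c ∈ I' → I' = {c}) ∨
   (IsMaxVInterval P I ∧ ∀ I', IsMaxHInterval P I' → c ∈ I' → I' = {c}))

/-!
Two cells of `P` attack each other exactly when they share their maximal horizontal or their
maximal vertical interval. Hence `G_P` is the line graph of the bipartite multigraph whose
vertices are the maximal intervals and whose edges are the cells, and the maximal independent
sets of `G_P` are its maximal matchings.

If this bipartite graph is equimatchable, then either every maximal matching saturates the
horizontal side or every one saturates the vertical side. Indeed, counting shows that as soon as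
one maximal matching misses a horizontal vertex, all of them do; so otherwise some maximal
matching misses both a horizontal vertex `a` and a vertical vertex `b`, and exchanging edges of
the matching along a path from `a` to `b` shortens that path, because in an equimatchable graph
every matching as large as a maximal one is maximal. The maximal intervals of the saturated
side then form the required partition into cliques.

Conversely, a clique meets an independent set at most once, so a partition into cliques each
meeting every maximal independent set `F` has exactly `|F|` blocks.
-/

open Finset

section Matching

variable {α β γ : Type*}

/-- Matchings of the bipartite multigraph with edge set `E`, the edge `x` joining the left
vertex `h x` to the right vertex `v x`. -/
def IsMatching (h : α → β) (v : α → γ) (E M : Finset α) : Prop :=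
  M ⊆ E ∧ Set.InjOn h M ∧ Set.InjOn v M

def IsEquimatchable (h : α → β) (v : α → γ) (E : Finset α) : Prop :=
  ∀ M M', Maximal (IsMatching h v E) M → Maximal (IsMatching h v E) M' → #M = #M'

variable {h : α → β} {v : α → γ} {E M N : Finset α}

lemma IsMatching.mono (hM : IsMatching h v E M) (hNM : N ⊆ M) : IsMatching h v E N :=
  ⟨hNM.trans hM.1, hM.2.1.mono (coe_subset.2 hNM), hM.2.2.mono (coe_subset.2 hNM)⟩

lemma IsMatching.exists_maximal_superset (hM : IsMatching h v E M) :
    ∃ M', M ⊆ M' ∧ Maximal (IsMatching h v E) M' := by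
  classical
  have hmem : ∀ N, N ∈ E.powerset.filter (IsMatching h v E) ↔ IsMatching h v E N :=
    fun N => by simpa using fun hN : IsMatching h v E N => hN.1
  obtain ⟨M', hMM', hM'⟩ :=
    (E.powerset.filter (IsMatching h v E)).exists_le_maximal ((hmem M).2 hM)
  exact ⟨M', hMM', by simpa only [hmem] using hM'⟩

lemma IsEquimatchable.maximal_of_card_le (hE : IsEquimatchable h v E)
    (hM : Maximal (IsMatching h v E) M) (hN : IsMatching h v E N) (hcard : #M ≤ #N) :
    Maximal (IsMatching h v E) N := by
  obtain ⟨N', hNN', hN'⟩ := hN.exists_maximal_superset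
  rwa [eq_of_subset_of_card_le hNN' ((hE N' M hN' hM).le.trans hcard)]

lemma IsEquimatchable.image_left_eq [DecidableEq β] (hE : IsEquimatchable h v E)
    {M M' : Finset α} (hM : Maximal (IsMatching h v E) M) (hM' : Maximal (IsMatching h v E) M')
    (hsat : M.image h = E.image h) : M'.image h = E.image h := by
  refine eq_of_subset_of_card_le (image_subset_image hM'.prop.1) ?_
  rw [← hsat, card_image_of_injOn hM.prop.2.1, card_image_of_injOn hM'.prop.2.1, hE M M' hM hM']

lemma Finset.image_erase_of_injOn [DecidableEq α] [DecidableEq β] {f : α → β} {s : Finset α}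
    (hf : Set.InjOn f s) {a : α} (ha : a ∈ s) :
    (s.erase a).image f = (s.image f).erase (f a) := by
  ext b
  simp only [mem_image, mem_erase]
  constructor
  · rintro ⟨c, ⟨hca, hc⟩, rfl⟩
    exact ⟨fun H => hca (hf hc ha H), c, hc, rfl⟩
  · rintro ⟨hb, c, hc, rfl⟩
    exact ⟨c, ⟨fun H => hb (H ▸ rfl), hc⟩, rfl⟩

section Decidable

variable [DecidableEq α] [DecidableEq β] [DecidableEq γ]

lemma isMatching_insert {x : α} (hx : x ∉ M) :
    IsMatching h v E (insert x M) ↔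
      IsMatching h v E M ∧ x ∈ E ∧ h x ∉ M.image h ∧ v x ∉ M.image v := by
  simp only [IsMatching, insert_subset_iff, coe_insert, Set.injOn_insert (mem_coe.not.2 hx),
    ← coe_image, mem_coe]
  tauto

lemma maximal_isMatching_iff : Maximal (IsMatching h v E) M ↔
    IsMatching h v E M ∧ ∀ x ∈ E, h x ∈ M.image h ∨ v x ∈ M.image v := by
  rw [maximal_iff_forall_insert fun _ _ hM hsub => hM.mono hsub]
  refine and_congr_right fun hM => ⟨fun hmax x hx => ?_, fun hcov x hx hins => ?_⟩
  · by_contra! hfree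
    have hxM : x ∉ M := fun hxM => hfree.1 (mem_image_of_mem h hxM)
    exact hmax x hxM ((isMatching_insert hxM).2 ⟨hM, hx, hfree⟩)
  · obtain ⟨-, hxE, hh, hv⟩ := (isMatching_insert hx).1 hins
    exact (hcov x hxE).elim hh hv

lemma IsEquimatchable.exists_free_of_card_lt (hE : IsEquimatchable h v E)
    (hM : Maximal (IsMatching h v E) M) (hN : IsMatching h v E N) (hlt : #N < #M) :
    ∃ z ∈ E, h z ∉ N.image h ∧ v z ∉ N.image v := by
  by_contra! hcov
  exact hlt.ne' (hE M N hM (maximal_isMatching_iff.2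
    ⟨hN, fun z hz => or_iff_not_imp_left.2 (hcov z hz)⟩))

lemma IsEquimatchable.maximal_insert_erase (hE : IsEquimatchable h v E)
    (hM : Maximal (IsMatching h v E) M) {e z : α} (he : e ∈ M) (hz : z ∈ E)
    (hzh : h z = h e ∨ h z ∉ M.image h) (hzv : v z = v e ∨ v z ∉ M.image v) :
    Maximal (IsMatching h v E) (insert z (M.erase e)) ∧
      (insert z (M.erase e)).image h = insert (h z) ((M.image h).erase (h e)) ∧
      (insert z (M.erase e)).image v = insert (v z) ((M.image v).erase (v e)) := by
  obtain ⟨-, hinjh, hinjv⟩ := hM.prop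
  have hzh' : h z ∉ (M.erase e).image h := by
    rw [image_erase_of_injOn hinjh he]
    rcases hzh with hzh | hzh <;> simp [hzh]
  have hzv' : v z ∉ (M.erase e).image v := by
    rw [image_erase_of_injOn hinjv he]
    rcases hzv with hzv | hzv <;> simp [hzv]
  have hzM : z ∉ M.erase e := fun hzM => hzh' (mem_image_of_mem h hzM)
  refine ⟨hE.maximal_of_card_le hM ((isMatching_insert hzM).2
    ⟨hM.prop.mono (erase_subset e M), hz, hzh', hzv'⟩) ?_, ?_, ?_⟩
  · rw [card_insert_of_notMem hzM, card_erase_add_one he]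
  · rw [image_insert, image_erase_of_injOn hinjh he]
  · rw [image_insert, image_erase_of_injOn hinjv he]

/-- After exchanging `e₁, e₂` for `y`, the matching is too small to be maximal, so some edge
`z` can be added to it. -/
lemma IsEquimatchable.exists_edge_of_exchange (hE : IsEquimatchable h v E)
    (hM : Maximal (IsMatching h v E) M) {e₁ e₂ y : α} (he₁ : e₁ ∈ M) (he₂ : e₂ ∈ M)
    (hne : e₁ ≠ e₂) (hy : y ∈ E) (hy₁ : v y = v e₁) (hy₂ : h y = h e₂) :
    ∃ z ∈ E, (h z = h e₁ ∧ v z = v e₂) ∨ (h z = h e₁ ∧ v z ∉ M.image v) ∨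
      (h z ∉ M.image h ∧ v z = v e₂) := by
  obtain ⟨-, hinjh, hinjv⟩ := hM.prop
  have he₂' : e₂ ∈ M.erase e₁ := mem_erase.2 ⟨hne.symm, he₂⟩
  have hMe := hM.prop.mono (erase_subset e₁ M)
  have hL : ((M.erase e₁).erase e₂).image h = ((M.image h).erase (h e₁)).erase (h e₂) := by
    rw [image_erase_of_injOn hMe.2.1 he₂', image_erase_of_injOn hinjh he₁]
  have hR : ((M.erase e₁).erase e₂).image v = ((M.image v).erase (v e₁)).erase (v e₂) := by
    rw [image_erase_of_injOn hMe.2.2 he₂', image_erase_of_injOn hinjv he₁]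
  have hyh : h y ∉ ((M.erase e₁).erase e₂).image h := by simp [hL, hy₂]
  have hyN : y ∉ (M.erase e₁).erase e₂ := fun hyN => hyh (mem_image_of_mem h hyN)
  have hN : IsMatching h v E (insert y ((M.erase e₁).erase e₂)) :=
    (isMatching_insert hyN).2 ⟨hMe.mono (erase_subset _ _), hy, hyh, by simp [hR, hy₁]⟩
  have hlt : #(insert y ((M.erase e₁).erase e₂)) < #M := by
    rw [card_insert_of_notMem hyN, ← card_erase_add_one he₁, ← card_erase_add_one he₂']
    omega
  obtain ⟨z, hzE, hzh, hzv⟩ := hE.exists_free_of_card_lt hM hN hlt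
  simp only [image_insert, hL, hR, mem_insert, mem_erase, not_or, not_and] at hzh hzv
  have := (maximal_isMatching_iff.1 hM).2 z hzE
  exact ⟨z, hzE, by grind⟩

lemma IsEquimatchable.forall_covers_of_right_eq (hE : IsEquimatchable h v E) {x y : α}
    (hx : x ∈ E) (hy : y ∈ E) (hxy : v x = v y) {b : γ}
    (ih : ∀ M, Maximal (IsMatching h v E) M → h y ∈ M.image h ∨ b ∈ M.image v)
    (M : Finset α) (hM : Maximal (IsMatching h v E) M) :
    h x ∈ M.image h ∨ b ∈ M.image v := by
  by_contra! hfree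
  obtain ⟨hxM, hbM⟩ := hfree
  obtain ⟨-, hinjh, hinjv⟩ := hM.prop
  obtain ⟨e₁, he₁M, he₁⟩ : ∃ e₁ ∈ M, v e₁ = v x := by
    simpa [hxM] using (maximal_isMatching_iff.1 hM).2 x hx
  obtain ⟨e₂, he₂M, he₂⟩ : ∃ e₂ ∈ M, h e₂ = h y := by simpa [hbM] using ih M hM
  have he₁h := mem_image_of_mem h he₁M
  have he₂v := mem_image_of_mem v he₂M
  -- Each case below yields a maximal matching that misses `h y` and `b`, contradicting `ih`,
  -- or one that misses both ends of `x`.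
  obtain ⟨hM', hL', hR'⟩ :=
    hE.maximal_insert_erase hM he₁M hx (Or.inr hxM) (Or.inl he₁.symm)
  by_cases he : e₁ = e₂
  · subst he
    have := ih _ hM'
    simp only [hL', hR', mem_insert, mem_erase] at this
    grind
  have hh₁₂ : h e₁ ≠ h e₂ := fun H => he (hinjh he₁M he₂M H)
  have hv₁₂ : v e₁ ≠ v e₂ := fun H => he (hinjv he₁M he₂M H)
  obtain ⟨z, hzE, ⟨hz₁, hz₂⟩ | ⟨hz₁, hz₂⟩ | ⟨hz₁, hz₂⟩⟩ :=
    hE.exists_edge_of_exchange hM he₁M he₂M he hy (hxy ▸ he₁.symm) he₂.symm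
  · obtain ⟨hM₄, hL₄, hR₄⟩ := hE.maximal_insert_erase hM'
      (mem_insert_of_mem (mem_erase.2 ⟨Ne.symm he, he₂M⟩)) hzE
      (Or.inr (by simp only [hL', mem_insert, mem_erase]; grind)) (Or.inl hz₂)
    have := ih _ hM₄
    simp only [hL₄, hR₄, hL', hR', mem_insert, mem_erase] at this
    grind
  · obtain ⟨hM₂, hL₂, hR₂⟩ :=
      hE.maximal_insert_erase hM he₁M hzE (Or.inl hz₁) (Or.inr hz₂)
    have := (maximal_isMatching_iff.1 hM₂).2 x hx
    simp only [hL₂, hR₂, mem_insert, mem_erase] at this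
    grind
  · obtain ⟨hM₅, hL₅, hR₅⟩ :=
      hE.maximal_insert_erase hM he₂M hzE (Or.inr hz₁) (Or.inl hz₂)
    have := ih _ hM₅
    simp only [hL₅, hR₅, mem_insert, mem_erase] at this
    grind

end Decidable

lemma IsEquimatchable.covers_of_reflTransGen [DecidableEq β] [DecidableEq γ]
    (hE : IsEquimatchable h v E) {x y : α}
    (hxy : Relation.ReflTransGen (fun x y => x ∈ E ∧ y ∈ E ∧ (h x = h y ∨ v x = v y)) x y)
    (hy : y ∈ E) (M : Finset α) (hM : Maximal (IsMatching h v E) M) :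
    h x ∈ M.image h ∨ v y ∈ M.image v := by
  classical
  induction hxy using Relation.ReflTransGen.head_induction_on generalizing M with
  | refl => exact (maximal_isMatching_iff.1 hM).2 y hy
  | head hxx' _ ih =>
    obtain ⟨hx, hx', hh | hv⟩ := hxx'
    · simpa only [hh] using ih M hM
    · exact hE.forall_covers_of_right_eq hx hx' hv ih M hM

theorem IsEquimatchable.saturates_one_side [DecidableEq β] [DecidableEq γ]
    (hE : IsEquimatchable h v E)
    (hconn : ∀ x ∈ E, ∀ y ∈ E,
      Relation.ReflTransGen (fun x y => x ∈ E ∧ y ∈ E ∧ (h x = h y ∨ v x = v y)) x y) :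
    (∀ M, Maximal (IsMatching h v E) M → M.image h = E.image h) ∨
      (∀ M, Maximal (IsMatching h v E) M → M.image v = E.image v) := by
  by_contra! hnot
  obtain ⟨⟨M₁, hM₁, hL⟩, ⟨M, hM, hR⟩⟩ := hnot
  have hL : M.image h ≠ E.image h := fun hsat => hL (hE.image_left_eq hM hM₁ hsat)
  obtain ⟨a, haE, haM⟩ := exists_of_ssubset ((image_subset_image hM.prop.1).ssubset_of_ne hL)
  obtain ⟨b, hbE, hbM⟩ := exists_of_ssubset ((image_subset_image hM.prop.1).ssubset_of_ne hR)
  obtain ⟨x, hx, rfl⟩ := mem_image.1 haE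
  obtain ⟨y, hy, rfl⟩ := mem_image.1 hbE
  exact (hE.covers_of_reflTransGen (hconn x hx y hy) hy M hM).elim haM hbM

end Matching

lemma Finset.card_eq_card_of_transversal {α : Type*} [DecidableEq α] {Q : Finset (Finset α)}
    {F : Finset α}
    (hdisj : ∀ C ∈ Q, ∀ D ∈ Q, C ≠ D → Disjoint C D) (hcover : F ⊆ Q.biUnion id)
    (hmeet : ∀ C ∈ Q, (C ∩ F).Nonempty)
    (hsingle : ∀ C ∈ Q, ∀ a ∈ C, ∀ b ∈ C, a ∈ F → b ∈ F → a = b) : #F = #Q := by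
  refine le_antisymm (card_le_card_of_forall_subsingleton (fun a C => a ∈ C) ?_ ?_)
    (card_le_card_of_forall_subsingleton (fun C a => a ∈ C) ?_ ?_)
  · intro a ha
    simpa using hcover ha
  · exact fun C hC a ⟨haF, haC⟩ b ⟨hbF, hbC⟩ => hsingle C hC a haC b hbC haF hbF
  · exact fun C hC => (hmeet C hC).imp fun a ha => ⟨(mem_inter.1 ha).2, (mem_inter.1 ha).1⟩
  · exact fun a _ C ⟨hC, haC⟩ D ⟨hD, haD⟩ =>
      by_contra fun hCD => disjoint_left.1 (hdisj C hC D hD hCD) haC haD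

section Segments

lemma image_Icc_union_image_Icc {f : ℤ → Cell} (hf : f.Injective) {a b c d : ℤ}
    (hmeet : ((Icc a b).image f ∩ (Icc c d).image f).Nonempty) :
    (Icc a b).image f ∪ (Icc c d).image f = (Icc (min a c) (max b d)).image f := by
  obtain ⟨p, hp⟩ := hmeet
  simp only [mem_inter, mem_image, mem_Icc] at hp
  obtain ⟨⟨s, hs, rfl⟩, t, ht, hts⟩ := hp
  have := hf hts
  rw [← image_union]
  congr 1
  ext n
  simp only [mem_union, mem_Icc]
  omega

structure IsSegmentFamily (seg : Finset Cell → Prop) : Prop where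
  singleton : ∀ c, seg {c}
  union : ∀ S T, seg S → seg T → (S ∩ T).Nonempty → seg (S ∪ T)

lemma isSegmentFamily_isHSeg : IsSegmentFamily IsHSeg where
  singleton c := ⟨c.2, c.1, c.1, le_rfl, by simp⟩
  union := by
    rintro _ _ ⟨y, a, b, hab, rfl⟩ ⟨y', c, d, hcd, rfl⟩ hmeet
    obtain rfl : y = y' := by
      obtain ⟨p, hp⟩ := hmeet
      simp only [mem_inter, mem_image] at hp
      obtain ⟨⟨s, -, rfl⟩, t, -, hts⟩ := hp
      exact (Prod.mk.inj hts).2.symm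
    exact ⟨y, min a c, max b d, by omega,
      image_Icc_union_image_Icc (Prod.mk_left_injective y) hmeet⟩

lemma isSegmentFamily_isVSeg : IsSegmentFamily IsVSeg where
  singleton c := ⟨c.1, c.2, c.2, le_rfl, by simp⟩
  union := by
    rintro _ _ ⟨x, a, b, hab, rfl⟩ ⟨x', c, d, hcd, rfl⟩ hmeet
    obtain rfl : x = x' := by
      obtain ⟨p, hp⟩ := hmeet
      simp only [mem_inter, mem_image] at hp
      obtain ⟨⟨s, -, rfl⟩, t, -, hts⟩ := hp
      exact (Prod.mk.inj hts).1.symm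
    exact ⟨x, min a c, max b d, by omega,
      image_Icc_union_image_Icc (Prod.mk_right_injective x) hmeet⟩

lemma isHSeg_pair {c d : Cell} (h2 : c.2 = d.2) (h1 : d.1 = c.1 + 1) : IsHSeg {c, d} := by
  refine ⟨c.2, c.1, d.1, by omega, ?_⟩
  ext p
  simp only [mem_insert, mem_singleton, mem_image, mem_Icc]
  constructor
  · rintro (rfl | rfl)
    · exact ⟨p.1, by omega, rfl⟩
    · exact ⟨p.1, by omega, by rw [h2]⟩
  · rintro ⟨x, hx, rfl⟩
    obtain rfl | rfl : x = c.1 ∨ x = d.1 := by omega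
    · exact Or.inl rfl
    · exact Or.inr (by rw [h2])

lemma isVSeg_pair {c d : Cell} (h1 : c.1 = d.1) (h2 : d.2 = c.2 + 1) : IsVSeg {c, d} := by
  refine ⟨c.1, c.2, d.2, by omega, ?_⟩
  ext p
  simp only [mem_insert, mem_singleton, mem_image, mem_Icc]
  constructor
  · rintro (rfl | rfl)
    · exact ⟨p.2, by omega, rfl⟩
    · exact ⟨p.2, by omega, by rw [h1]⟩
  · rintro ⟨y, hy, rfl⟩
    obtain rfl | rfl : y = c.2 ∨ y = d.2 := by omega
    · exact Or.inl rfl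
    · exact Or.inr (by rw [h1])

end Segments

section MaximalSegments

variable {seg : Finset Cell → Prop} {P I J S : Finset Cell} {c d : Cell}

/-- `IsMaxHInterval P I` and `IsMaxVInterval P I` unfold to `IsMaxSeg IsHSeg P I` and
`IsMaxSeg IsVSeg P I`. -/
def IsMaxSeg (seg : Finset Cell → Prop) (P I : Finset Cell) : Prop :=
  seg I ∧ I ⊆ P ∧ ∀ I', seg I' → I' ⊆ P → I ⊆ I' → I' = I

open Classical in
/-- Empty when `c ∉ P`. -/
noncomputable def segThrough (seg : Finset Cell → Prop) (P : Finset Cell) (c : Cell) :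
    Finset Cell :=
  {d ∈ P | ∃ I, IsMaxSeg seg P I ∧ c ∈ I ∧ d ∈ I}

lemma exists_isMaxSeg (hseg : IsSegmentFamily seg) (hc : c ∈ P) :
    ∃ I, IsMaxSeg seg P I ∧ c ∈ I := by
  classical
  obtain ⟨I, hcI, hI⟩ :=
    (P.powerset.filter seg).exists_le_maximal (a := {c}) (by simp [hc, hseg.singleton c])
  simp only [Maximal, mem_filter, mem_powerset] at hI
  refine ⟨I, ⟨hI.1.2, hI.1.1, fun I' hI' hI'P hII' => ?_⟩, singleton_subset_iff.1 hcI⟩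
  exact (hI.2 ⟨hI'P, hI'⟩ hII').antisymm hII'

lemma IsMaxSeg.subset_of_inter (hseg : IsSegmentFamily seg) (hI : IsMaxSeg seg P I) (hS : seg S)
    (hSP : S ⊆ P) (hmeet : (I ∩ S).Nonempty) : S ⊆ I := by
  rw [← hI.2.2 _ (hseg.union I S hI.1 hS hmeet) (union_subset hI.2.1 hSP) subset_union_left]
  exact subset_union_right

lemma IsMaxSeg.eq_of_mem (hseg : IsSegmentFamily seg) (hI : IsMaxSeg seg P I)
    (hJ : IsMaxSeg seg P J) (hcI : c ∈ I) (hcJ : c ∈ J) : I = J :=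
  (hJ.subset_of_inter hseg hI.1 hI.2.1 ⟨c, mem_inter.2 ⟨hcJ, hcI⟩⟩).antisymm
    (hI.subset_of_inter hseg hJ.1 hJ.2.1 ⟨c, mem_inter.2 ⟨hcI, hcJ⟩⟩)

lemma IsMaxSeg.segThrough_eq (hseg : IsSegmentFamily seg) (hI : IsMaxSeg seg P I) (hc : c ∈ I) :
    segThrough seg P c = I := by
  ext d
  simp only [segThrough, mem_filter]
  exact ⟨fun ⟨_, J, hJ, hcJ, hdJ⟩ => hJ.eq_of_mem hseg hI hcJ hc ▸ hdJ,
    fun hdI => ⟨hI.2.1 hdI, I, hI, hc, hdI⟩⟩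

lemma isMaxSeg_segThrough (hseg : IsSegmentFamily seg) (hc : c ∈ P) :
    IsMaxSeg seg P (segThrough seg P c) ∧ c ∈ segThrough seg P c := by
  obtain ⟨I, hI, hcI⟩ := exists_isMaxSeg hseg hc
  rw [hI.segThrough_eq hseg hcI]
  exact ⟨hI, hcI⟩

lemma segThrough_eq_of_mem (hseg : IsSegmentFamily seg) (hc : c ∈ P)
    (hd : d ∈ segThrough seg P c) :
    segThrough seg P d = segThrough seg P c :=
  (isMaxSeg_segThrough hseg hc).1.segThrough_eq hseg hd

lemma segThrough_eq_of_pair (hseg : IsSegmentFamily seg) (hpair : seg {c, d}) (hc : c ∈ P)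
    (hd : d ∈ P) :
    segThrough seg P d = segThrough seg P c := by
  obtain ⟨hI, hcI⟩ := isMaxSeg_segThrough hseg hc
  refine segThrough_eq_of_mem hseg hc (hI.subset_of_inter hseg hpair ?_ ⟨c, ?_⟩ ?_)
  · simp [insert_subset_iff, hc, hd]
  · simp [hcI]
  · simp

end MaximalSegments

section RookSets

variable {P F : Finset Cell} {c d : Cell}

lemma attacks_iff (hc : c ∈ P) (hd : d ∈ P) :
    Attacks P c d ↔ c ≠ d ∧ (segThrough IsHSeg P c = segThrough IsHSeg P d ∨
      segThrough IsVSeg P c = segThrough IsVSeg P d) := by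
  have hH := isSegmentFamily_isHSeg
  have hV := isSegmentFamily_isVSeg
  refine and_congr_right fun _ => ⟨?_, ?_⟩
  · rintro ⟨I, hI | hI, hcI, hdI⟩
    · exact Or.inl ((IsMaxSeg.segThrough_eq hH hI hcI).trans
        (IsMaxSeg.segThrough_eq hH hI hdI).symm)
    · exact Or.inr ((IsMaxSeg.segThrough_eq hV hI hcI).trans
        (IsMaxSeg.segThrough_eq hV hI hdI).symm)
  · rintro (hcd | hcd)
    · exact ⟨_, Or.inl (isMaxSeg_segThrough hH hc).1, (isMaxSeg_segThrough hH hc).2,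
        hcd ▸ (isMaxSeg_segThrough hH hd).2⟩
    · exact ⟨_, Or.inr (isMaxSeg_segThrough hV hc).1, (isMaxSeg_segThrough hV hc).2,
        hcd ▸ (isMaxSeg_segThrough hV hd).2⟩

lemma isRookSet_iff :
    IsRookSet P F ↔ IsMatching (segThrough IsHSeg P) (segThrough IsVSeg P) P F := by
  refine and_congr_right fun hFP =>
    ⟨fun hF => ⟨?_, ?_⟩, fun ⟨hh, hv⟩ c hc d hd hcd => ?_⟩
  · exact fun c hc d hd hcd => by_contra fun hne =>
      hF c hc d hd ((attacks_iff (hFP hc) (hFP hd)).2 ⟨hne, Or.inl hcd⟩)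
  · exact fun c hc d hd hcd => by_contra fun hne =>
      hF c hc d hd ((attacks_iff (hFP hc) (hFP hd)).2 ⟨hne, Or.inr hcd⟩)
  · obtain ⟨hne, hcd | hcd⟩ := (attacks_iff (hFP hc) (hFP hd)).1 hcd
    exacts [hne (hh hc hd hcd), hne (hv hc hd hcd)]

lemma isMaxRookSet_iff :
    IsMaxRookSet P F ↔ Maximal (IsMatching (segThrough IsHSeg P) (segThrough IsVSeg P) P) F := by
  rw [IsMaxRookSet, maximal_iff]
  refine and_congr isRookSet_iff (forall_congr' fun G => ?_)
  rw [isRookSet_iff, eq_comm]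

lemma segThrough_eq_of_adjacent (hc : c ∈ P) (hd : d ∈ P) (hadj : Adjacent c d) :
    segThrough IsHSeg P c = segThrough IsHSeg P d ∨
      segThrough IsVSeg P c = segThrough IsVSeg P d := by
  have hH := isSegmentFamily_isHSeg
  have hV := isSegmentFamily_isVSeg
  rcases hadj with ⟨h1, h2 | h2⟩ | ⟨h2, h1 | h1⟩
  · exact Or.inr (segThrough_eq_of_pair hV (isVSeg_pair h1.symm h2) hd hc)
  · exact Or.inr (segThrough_eq_of_pair hV (isVSeg_pair h1 h2) hc hd).symm
  · exact Or.inl (segThrough_eq_of_pair hH (isHSeg_pair h2.symm h1) hd hc)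
  · exact Or.inl (segThrough_eq_of_pair hH (isHSeg_pair h2 h1) hc hd).symm

lemma IsPolyomino.reflTransGen_segThrough (hP : IsPolyomino P) (hc : c ∈ P) (hd : d ∈ P) :
    Relation.ReflTransGen (fun x y => x ∈ P ∧ y ∈ P ∧
      (segThrough IsHSeg P x = segThrough IsHSeg P y ∨
        segThrough IsVSeg P x = segThrough IsVSeg P y)) c d :=
  Relation.ReflTransGen.mono
    (fun _ _ ⟨hadj, hx, hy⟩ => ⟨hx, hy, segThrough_eq_of_adjacent hx hy hadj⟩) c d
    (hP.2 c hc d hd)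

lemma exists_localizing_of_saturates {seg : Finset Cell → Prop} (hseg : IsSegmentFamily seg)
    (hmax : ∀ I, IsMaxSeg seg P I → IsMaxInterval P I)
    (hsat : ∀ F, IsMaxRookSet P F → F.image (segThrough seg P) = P.image (segThrough seg P)) :
    ∃ Q : Finset (Finset Cell),
      (∀ C ∈ Q, C ⊆ P ∧ ∀ c ∈ C, ∀ d ∈ C, c ≠ d → Attacks P c d) ∧
      (∀ C ∈ Q, ∀ D ∈ Q, C ≠ D → Disjoint C D) ∧
      Q.biUnion id = P ∧
      (∀ C ∈ Q, ∀ F, IsMaxRookSet P F → (C ∩ F).Nonempty) := by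
  have hthrough := fun c (hc : c ∈ P) => isMaxSeg_segThrough hseg hc
  refine ⟨P.image (segThrough seg P), ?_, ?_, ?_, ?_⟩
  · simp only [forall_mem_image]
    exact fun c hc => ⟨(hthrough c hc).1.2.1,
      fun a ha b hb hab => ⟨hab, _, hmax _ (hthrough c hc).1, ha, hb⟩⟩
  · simp only [forall_mem_image]
    intro c hc d hd hne
    refine disjoint_left.2 fun e hec hed => hne ?_
    rw [← segThrough_eq_of_mem hseg hc hec, segThrough_eq_of_mem hseg hd hed]
  · ext e
    simp only [mem_biUnion, mem_image, id, exists_exists_and_eq_and]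
    exact ⟨fun ⟨c, hc, he⟩ => (hthrough c hc).1.2.1 he,
      fun he => ⟨e, he, (hthrough e he).2⟩⟩
  · simp only [forall_mem_image]
    intro c hc F hF
    obtain ⟨f, hf, hfc⟩ := mem_image.1 ((hsat F hF).symm ▸ mem_image_of_mem _ hc)
    exact ⟨f, mem_inter.2 ⟨hfc ▸ (hthrough f (hF.1.1 hf)).2, hf⟩⟩

end RookSets

/-- `G_P` is well-covered iff `G_P` is localizable. -/
theorem statement4 (P : Finset Cell) (hP : IsPolyomino P) :
    (∀ F G, IsMaxRookSet P F → IsMaxRookSet P G → F.card = G.card) ↔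
      ∃ Q : Finset (Finset Cell),
        (∀ C ∈ Q, C ⊆ P ∧ ∀ c ∈ C, ∀ d ∈ C, c ≠ d → Attacks P c d) ∧
        (∀ C ∈ Q, ∀ D ∈ Q, C ≠ D → Disjoint C D) ∧
        Q.biUnion id = P ∧
        (∀ C ∈ Q, ∀ F, IsMaxRookSet P F → (C ∩ F).Nonempty) := by
  constructor
  · intro hwc
    have hE : IsEquimatchable (segThrough IsHSeg P) (segThrough IsVSeg P) P :=
      fun M M' hM hM' => hwc M M' (isMaxRookSet_iff.2 hM) (isMaxRookSet_iff.2 hM')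
    rcases hE.saturates_one_side fun c hc d hd => hP.reflTransGen_segThrough hc hd with hsat | hsat
    · exact exists_localizing_of_saturates isSegmentFamily_isHSeg (fun _ => Or.inl)
        fun F hF => hsat F (isMaxRookSet_iff.1 hF)
    · exact exists_localizing_of_saturates isSegmentFamily_isVSeg (fun _ => Or.inr)
        fun F hF => hsat F (isMaxRookSet_iff.1 hF)
  · rintro ⟨Q, hclique, hdisj, hcover, hmeet⟩ F G hF hG
    have hcard : ∀ F, IsMaxRookSet P F → F.card = Q.card := fun F hF =>
      card_eq_card_of_transversal hdisj (hcover ▸ hF.1.1) (fun C hC => hmeet C hC F hF)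
        fun C hC a ha b hb haF hbF => by_contra fun hab =>
          hF.1.2 a haF b hbF ((hclique C hC).2 a ha b hb hab)
    rw [hcard F hF, hcard G hG]
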